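/- arXiv:2402.03624 — 4 statements merged into one kernel-verified Lean document; each statement's English description precedes it below -/
import Mathlib

section
/- For quaternions a, b with t = √(|a|² + |b|²) ≠ 0 and |a| ≤ |b| with b ≠ 0, the 2×2 quaternion matrix G = [[a/t, |b|/t], [b/t, -(b/|b|)(a/t)*]] is unitary, i.e., G*G = I. -/
open Quaternion Matrix

theorem givens_unitary (a b : ℍ[ℝ]) (t : ℝ)
    (ht : t = Real.sqrt (‖a‖ ^ 2 + ‖b‖ ^ 2)) (htne : t ≠ 0)
    (hab : ‖a‖ ≤ ‖b‖) (hb : b ≠ 0) :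
    let G : Matrix (Fin 2) (Fin 2) ℍ[ℝ] :=
      !![a / (t : ℍ[ℝ]), ((‖b‖ / t : ℝ) : ℍ[ℝ]);
         b / (t : ℍ[ℝ]), -(b / ((‖b‖ : ℝ) : ℍ[ℝ])) * star (a / (t : ℍ[ℝ]))]
    Gᴴ * G = 1 := by
  intro G
  have hbnorm : ‖b‖ ≠ 0 := norm_ne_zero_iff.mpr hb
  have h2 : (t:ℝ)^2 = ‖a‖^2 + ‖b‖^2 := by
    rw [ht]; exact Real.sq_sqrt (by positivity)
  have ha2 : star a * a = ((‖a‖^2 : ℝ) : ℍ[ℝ]) := by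
    rw [star_mul_self]; exact congrArg _ (by rw [normSq_eq_norm_mul_self, sq])
  have hb2 : star b * b = ((‖b‖^2 : ℝ) : ℍ[ℝ]) := by
    rw [star_mul_self]; exact congrArg _ (by rw [normSq_eq_norm_mul_self, sq])
  have hb2' : b * star b = ((‖b‖^2 : ℝ) : ℍ[ℝ]) := by
    rw [self_mul_star]; exact congrArg _ (by rw [normSq_eq_norm_mul_self, sq])
  have ha2' : a * star a = ((‖a‖^2 : ℝ) : ℍ[ℝ]) := by
    rw [self_mul_star]; exact congrArg _ (by rw [normSq_eq_norm_mul_self, sq])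
  have hb2'' : ∀ x : ℍ[ℝ], star b * (b * x) = ((‖b‖^2 : ℝ) : ℍ[ℝ]) * x := by
    intro x; rw [← mul_assoc, hb2]
  apply Matrix.ext; intro i j
  fin_cases i <;> fin_cases j <;>
    simp [G, Matrix.mul_apply, Fin.sum_univ_two, conjTranspose_apply, Matrix.one_apply,
      div_eq_mul_inv, ← Quaternion.coe_inv, mul_assoc, StarMul.star_mul] <;>
    simp only [Quaternion.coe_mul_eq_smul, Quaternion.mul_coe_eq_smul, smul_mul_assoc,
      mul_smul_comm, smul_smul, mul_assoc, ha2, hb2, hb2'] <;>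
    simp only [hb2'', Quaternion.coe_mul_eq_smul, mul_smul_comm, smul_smul, ha2',
      Quaternion.smul_coe, ← sub_eq_add_neg, ← sub_smul, ← add_smul] <;>
    first
      | (rw [smul_eq_zero]; left; field_simp; try ring)
      | (rw [← Quaternion.coe_add, show (1:ℍ[ℝ]) = ((1:ℝ):ℍ[ℝ]) from (Quaternion.coe_one).symm,
          Quaternion.coe_inj]; field_simp;
         first
           | linear_combination h2
           | linear_combination -h2
           | linear_combination (‖b‖^2*t^2) * h2
           | linear_combination (-(‖b‖^2*t^2)) * h2)
end

section
/- Let two sequences in ℚⁿ be generated by the recurrences v̄_{j+1} = A vⱼ - vⱼ αⱼ - v_{j-1} τⱼ and w̄_{j+1} = A* wⱼ - wⱼ ᾱⱼ - w_{j-1}(ρⱼ σ_{j-1}^{-*} σⱼ*), normalized by vⱼ₊₁ = v̄ⱼ₊₁/ρⱼ₊₁ and wⱼ₊₁ = w̄ⱼ₊₁/εⱼ₊₁ with ρⱼ₊₁ = ‖v̄ⱼ₊₁‖, εⱼ₊₁ = ‖w̄ⱼ₊₁‖, where αⱼ = σⱼ⁻¹⟨A vⱼ, wⱼ⟩, ᾱⱼ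 = σⱼ^{-*}⟨A vⱼ, wⱼ⟩*, σⱼ = ⟨vⱼ, wⱼ⟩ ≠ 0, τⱼ₊₁ = εⱼ₊₁ σⱼ⁻¹ σⱼ₊₁, with v₀ = w₀ = 0. Then ⟨vⱼ₊₁, wⱼ⟩ = 0 provided ρⱼ₊₁ ≠ 0. -/
open Quaternion Matrix

/-- The quaternionic inner product `⟨x, y⟩ = Σᵢ yᵢ* xᵢ` on `ℚⁿ`. -/
noncomputable def qInner {n : ℕ} (x y : Fin n → ℍ[ℝ]) : ℍ[ℝ] :=
  ∑ i, star (y i) * x i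

/-- The quaternionic Euclidean norm `‖x‖₂ = √(Σᵢ |xᵢ|²)` on `ℚⁿ`. -/
noncomputable def qNorm {n : ℕ} (x : Fin n → ℍ[ℝ]) : ℝ :=
  Real.sqrt (∑ i, ‖x i‖ ^ 2)

lemma qInner_sub_left {n : ℕ} (x y z : Fin n → ℍ[ℝ]) :
    qInner (fun k => x k - y k) z = qInner x z - qInner y z := by
  simp [qInner, mul_sub, Finset.sum_sub_distrib]

lemma qInner_sub_right {n : ℕ} (x y z : Fin n → ℍ[ℝ]) :
    qInner x (fun k => y k - z k) = qInner x y - qInner x z := by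
  simp [qInner, sub_mul, Finset.sum_sub_distrib]

lemma qInner_smul_left {n : ℕ} (x y : Fin n → ℍ[ℝ]) (q : ℍ[ℝ]) :
    qInner (fun k => x k * q) y = qInner x y * q := by
  simp [qInner, Finset.sum_mul, mul_assoc]

lemma qInner_smul_right {n : ℕ} (x y : Fin n → ℍ[ℝ]) (q : ℍ[ℝ]) :
    qInner x (fun k => y k * q) = star q * qInner x y := by
  simp [qInner, Finset.mul_sum, mul_assoc]

lemma qInner_div_left {n : ℕ} (x y : Fin n → ℍ[ℝ]) (q : ℍ[ℝ]) :
    qInner (fun k => x k / q) y = qInner x y * q⁻¹ := by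
  simpa [div_eq_mul_inv] using qInner_smul_left x y q⁻¹

lemma qInner_div_right {n : ℕ} (x y : Fin n → ℍ[ℝ]) (q : ℍ[ℝ]) :
    qInner x (fun k => y k / q) = star q⁻¹ * qInner x y := by
  simpa [div_eq_mul_inv] using qInner_smul_right x y q⁻¹

lemma qInner_zero_left {n : ℕ} (y : Fin n → ℍ[ℝ]) : qInner 0 y = 0 := by
  simp [qInner]

lemma qInner_zero_right {n : ℕ} (x : Fin n → ℍ[ℝ]) : qInner x 0 = 0 := by
  simp [qInner]

lemma qInner_adjoint {n : ℕ} (A : Matrix (Fin n) (Fin n) ℍ[ℝ]) (x y : Fin n → ℍ[ℝ]) :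
    qInner x (Aᴴ *ᵥ y) = qInner (A *ᵥ x) y := by
  simp only [qInner, Matrix.mulVec, Matrix.conjTranspose_apply, dotProduct,
    star_sum, StarMul.star_mul, star_star, Finset.sum_mul, Finset.mul_sum, mul_assoc]
  rw [Finset.sum_comm]

theorem qbio_step_orthogonal {n : ℕ} (A : Matrix (Fin n) (Fin n) ℍ[ℝ])
    (v w vbar wbar : ℕ → Fin n → ℍ[ℝ])
    (σ α αbar τ : ℕ → ℍ[ℝ]) (ρ ε : ℕ → ℝ)
    (hv0 : v 0 = 0) (hw0 : w 0 = 0) (hτ1 : τ 1 = 0)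
    (hv1 : qNorm (v 1) = 1) (hw1 : qNorm (w 1) = 1)
    (hσ : ∀ j, 1 ≤ j → σ j = qInner (v j) (w j))
    (hσne : ∀ j, 1 ≤ j → σ j ≠ 0)
    (hα : ∀ j, 1 ≤ j → α j = (σ j)⁻¹ * qInner (A *ᵥ v j) (w j))
    (hαbar : ∀ j, 1 ≤ j → αbar j = (star (σ j))⁻¹ * star (qInner (A *ᵥ v j) (w j)))
    (hvbar : ∀ j, 1 ≤ j →
      vbar (j + 1) = fun k => (A *ᵥ v j) k - v j k * α j - v (j - 1) k * τ j)
    (hwbar : ∀ j, 1 ≤ j →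
      wbar (j + 1) = fun k => (Aᴴ *ᵥ w j) k - w j k * αbar j -
        w (j - 1) k * (((ρ j : ℝ) : ℍ[ℝ]) * (star (σ (j - 1)))⁻¹ * star (σ j)))
    (hρ : ∀ j, 1 ≤ j → ρ (j + 1) = qNorm (vbar (j + 1)))
    (hε : ∀ j, 1 ≤ j → ε (j + 1) = qNorm (wbar (j + 1)))
    (hvn : ∀ j, 1 ≤ j → v (j + 1) = fun k => vbar (j + 1) k / ((ρ (j + 1) : ℝ) : ℍ[ℝ]))
    (hwn : ∀ j, 1 ≤ j → w (j + 1) = fun k => wbar (j + 1) k / ((ε (j + 1) : ℝ) : ℍ[ℝ]))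
    (hτ : ∀ j, 1 ≤ j → τ (j + 1) = ((ε (j + 1) : ℝ) : ℍ[ℝ]) * (σ j)⁻¹ * σ (j + 1)) :
    ∀ j, 1 ≤ j → ρ (j + 1) ≠ 0 → qInner (v (j + 1)) (w j) = 0 := by
  -- Joint biorthogonality statement proved by induction.
  have key : ∀ j : ℕ, qInner (v (j + 1)) (w j) = 0 ∧ qInner (v j) (w (j + 1)) = 0 := by
    intro j
    induction j with
    | zero =>
      constructor
      · rw [hw0]; exact qInner_zero_right _
      · rw [hv0]; exact qInner_zero_left _
    | succ i ih =>
      obtain ⟨ih1, ih2⟩ := ih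
      set j := i + 1 with hj
      have hj1 : 1 ≤ j := Nat.le_add_left 1 i
      have hjm : j - 1 = i := rfl
      constructor
      · -- ⟨v (j+1), w j⟩ = 0
        rw [hvn j hj1, qInner_div_left]
        have hbar : qInner (vbar (j + 1)) (w j) = 0 := by
          rw [hvbar j hj1, qInner_sub_left, qInner_sub_left, qInner_smul_left,
            qInner_smul_left, hjm, ih2, ← hσ j hj1, hα j hj1, ← mul_assoc,
            mul_inv_cancel₀ (hσne j hj1), one_mul]
          simp
        rw [hbar, zero_mul]
      · -- ⟨v j, w (j+1)⟩ = 0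
        rw [hwn j hj1, qInner_div_right]
        have hbar : qInner (v j) (wbar (j + 1)) = 0 := by
          rw [hwbar j hj1, qInner_sub_right, qInner_sub_right, qInner_smul_right,
            qInner_smul_right, qInner_adjoint, hjm, ih1, ← hσ j hj1, hαbar j hj1]
          simp only [StarMul.star_mul, star_star, star_inv₀, mul_zero, sub_zero]
          rw [mul_assoc, inv_mul_cancel₀ (hσne j hj1), mul_one, sub_self]
        rw [hbar, mul_zero]
  intro j hj _
  exact (key j).1
end

section
/- (Quasi-residual bound) Suppose x_m = x₀ + V_m z_m where A V_m = V_{m+1} H_{m+1,m}, r₀ = b - A x₀ = V_{m+1}(β e₁) with β = ‖r₀‖₂, and the columns of V_{m+1} are unit quaternion vectors. Then the residual r_m = b - A x_m satisfies ‖r_m‖₂ ≤ √(m+1) · ‖β e₁ - H_{m+1,m} z_m‖₂. -/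
open Quaternion Matrix

/-! The Arnoldi relation `A V_m = V_{m+1} H` and `r₀ = V_{m+1} (β e₁)` give
`r_m = V_{m+1} (β e₁ - H z_m)`. By Cauchy–Schwarz, `V_{m+1}` stretches the quaternionic
Euclidean norm by at most its Frobenius norm, which is `√(m+1)` when its `m + 1` columns are
unit vectors. -/

lemma residual_eq_mulVec {R ι κ μ : Type*} [Ring R] [Fintype ι] [Fintype κ] [Fintype μ]
    (A : Matrix ι ι R) (V : Matrix ι κ R) (W : Matrix ι μ R) (H : Matrix μ κ R)
    (b x₀ : ι → R) (z : κ → R) (c : μ → R)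
    (hAV : A * V = W * H) (hr₀ : b - A *ᵥ x₀ = W *ᵥ c) :
    b - A *ᵥ (x₀ + V *ᵥ z) = W *ᵥ (c - H *ᵥ z) := by
  rw [mulVec_add, mulVec_mulVec, hAV, ← mulVec_mulVec, mulVec_sub, ← hr₀]
  abel

lemma qNorm_nonneg {n : ℕ} (x : Fin n → ℍ[ℝ]) : 0 ≤ qNorm x :=
  Real.sqrt_nonneg _

lemma sq_qNorm {n : ℕ} (x : Fin n → ℍ[ℝ]) : qNorm x ^ 2 = ∑ i, ‖x i‖ ^ 2 :=
  Real.sq_sqrt (by positivity)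

lemma norm_dotProduct_le_qNorm_mul_qNorm {n : ℕ} (v w : Fin n → ℍ[ℝ]) :
    ‖v ⬝ᵥ w‖ ≤ qNorm v * qNorm w :=
  calc ‖v ⬝ᵥ w‖ ≤ ∑ k, ‖v k * w k‖ := norm_sum_le _ _
    _ ≤ ∑ k, ‖v k‖ * ‖w k‖ := Finset.sum_le_sum fun _ _ => norm_mul_le _ _
    _ ≤ qNorm v * qNorm w := Real.sum_mul_le_sqrt_mul_sqrt _ _ _

lemma sq_qNorm_mulVec_le {n k : ℕ} (V : Matrix (Fin n) (Fin k) ℍ[ℝ]) (y : Fin k → ℍ[ℝ]) :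
    qNorm (V *ᵥ y) ^ 2 ≤ (∑ j, qNorm (fun i => V i j) ^ 2) * qNorm y ^ 2 := by
  have hrow : ∀ i, ‖(V *ᵥ y) i‖ ^ 2 ≤ qNorm (V i) ^ 2 * qNorm y ^ 2 := fun i => by
    rw [← mul_pow]
    exact pow_le_pow_left₀ (norm_nonneg _) (norm_dotProduct_le_qNorm_mul_qNorm _ _) 2
  calc qNorm (V *ᵥ y) ^ 2 ≤ ∑ i, qNorm (V i) ^ 2 * qNorm y ^ 2 := by
        rw [sq_qNorm]; exact Finset.sum_le_sum fun i _ => hrow i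
    _ = (∑ j, qNorm (fun i => V i j) ^ 2) * qNorm y ^ 2 := by
        simp only [← Finset.sum_mul, sq_qNorm]
        rw [Finset.sum_comm]

lemma qNorm_mulVec_le_of_qNorm_col_le_one {n k : ℕ} (V : Matrix (Fin n) (Fin k) ℍ[ℝ])
    (hcol : ∀ j, qNorm (fun i => V i j) ≤ 1) (y : Fin k → ℍ[ℝ]) :
    qNorm (V *ᵥ y) ≤ Real.sqrt k * qNorm y := by
  have hfrob : ∑ j, qNorm (fun i => V i j) ^ 2 ≤ k :=
    (Finset.sum_le_sum fun j _ => pow_le_one₀ (qNorm_nonneg _) (hcol j)).trans_eq (by simp)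
  rw [← pow_le_pow_iff_left₀ (qNorm_nonneg _) (mul_nonneg (Real.sqrt_nonneg _) (qNorm_nonneg _))
    two_ne_zero, mul_pow, Real.sq_sqrt (Nat.cast_nonneg k)]
  exact (sq_qNorm_mulVec_le V y).trans (mul_le_mul_of_nonneg_right hfrob (sq_nonneg _))

theorem quasi_residual_bound_general {n m : ℕ}
    (A : Matrix (Fin n) (Fin n) ℍ[ℝ]) (b x₀ : Fin n → ℍ[ℝ])
    (Vm : Matrix (Fin n) (Fin m) ℍ[ℝ])
    (Vm1 : Matrix (Fin n) (Fin (m + 1)) ℍ[ℝ])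
    (H : Matrix (Fin (m + 1)) (Fin m) ℍ[ℝ])
    (z : Fin m → ℍ[ℝ]) (β : ℝ)
    (hAV : A * Vm = Vm1 * H)
    (hr0 : b - A *ᵥ x₀ = Vm1 *ᵥ (fun i => if i = 0 then ((β : ℝ) : ℍ[ℝ]) else 0))
    (hcol : ∀ k, qNorm (fun i => Vm1 i k) = 1) :
    qNorm (b - A *ᵥ (x₀ + Vm *ᵥ z)) ≤
      Real.sqrt (m + 1) *
        qNorm ((fun i => if i = 0 then ((β : ℝ) : ℍ[ℝ]) else 0) - H *ᵥ z) := by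
  rw [residual_eq_mulVec A Vm Vm1 H b x₀ z _ hAV hr0]
  exact_mod_cast qNorm_mulVec_le_of_qNorm_col_le_one Vm1 (fun j => (hcol j).le) _

theorem quasi_residual_bound {n m : ℕ}
    (A : Matrix (Fin n) (Fin n) ℍ[ℝ]) (b x₀ : Fin n → ℍ[ℝ])
    (Vm : Matrix (Fin n) (Fin m) ℍ[ℝ])
    (Vm1 : Matrix (Fin n) (Fin (m + 1)) ℍ[ℝ])
    (H : Matrix (Fin (m + 1)) (Fin m) ℍ[ℝ])
    (z : Fin m → ℍ[ℝ]) (β : ℝ)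
    (hAV : A * Vm = Vm1 * H)
    (hβ : β = qNorm (b - A *ᵥ x₀))
    (hr0 : b - A *ᵥ x₀ = Vm1 *ᵥ (fun i => if i = 0 then ((β : ℝ) : ℍ[ℝ]) else 0))
    (hcol : ∀ k, qNorm (fun i => Vm1 i k) = 1) :
    qNorm (b - A *ᵥ (x₀ + Vm *ᵥ z)) ≤
      Real.sqrt (m + 1) *
        qNorm ((fun i => if i = 0 then ((β : ℝ) : ℍ[ℝ]) else 0) - H *ᵥ z) :=
  quasi_residual_bound_general A b x₀ Vm Vm1 H z β hAV hr0 hcol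
end

section
/- (Exactness at breakdown) Let A ∈ ℚ^{n×n} be invertible and suppose A V_m = V_m H_m with V_m ∈ ℚ^{n×m} having right-linearly independent columns and H_m ∈ ℚ^{m×m}. Then H_m is invertible, and for r₀ = V_m (β e₁) the vector x_m = x₀ + V_m H_m⁻¹ (β e₁) solves A x_m = A x₀ + r₀. -/
/-! `A Vₘ = Vₘ Hₘ` turns a kernel vector of `Hₘ` into one of `A Vₘ`, so `Hₘ *ᵥ ·` is injective
because `A` is invertible and the columns of `Vₘ` are independent. Over a division ring the
matrix ring is Artinian, so an injective square matrix is a unit. Then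
`A Vₘ Hₘ⁻¹ (β e₁) = Vₘ Hₘ Hₘ⁻¹ (β e₁) = r₀`. -/

open Quaternion Matrix

namespace Matrix

variable {R l m : Type*} [Fintype m]

theorem mulVec_injective_of_forall_mulVec_eq_zero [Ring R] {V : Matrix l m R}
    (hV : ∀ v, V *ᵥ v = 0 → v = 0) : Function.Injective V.mulVec := fun v w h =>
  sub_eq_zero.1 <| hV _ <| by rw [mulVec_sub, h, sub_self]

theorem mulVec_injective_of_mul_eq_mul [Fintype l] [NonUnitalSemiring R] {A : Matrix l l R}
    {V : Matrix l m R} {H : Matrix m m R} (hAV : A * V = V * H)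
    (hA : Function.Injective A.mulVec) (hV : Function.Injective V.mulVec) :
    Function.Injective H.mulVec := fun v w h => hV <| hA <| by
  rw [mulVec_mulVec, mulVec_mulVec, hAV, ← mulVec_mulVec, ← mulVec_mulVec, h]

theorem isUnit_of_mulVec_injective [DivisionRing R] [DecidableEq m] {H : Matrix m m R}
    (hH : Function.Injective H.mulVec) : IsUnit H :=
  IsArtinianRing.isUnit_iff_isLeftRegular.2 (isLeftRegular_iff_mulVec_injective.2 hH)

end Matrix

theorem exactness_at_breakdown {n m : ℕ}
    (A : Matrix (Fin n) (Fin n) ℍ[ℝ])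
    (Ainv : Matrix (Fin n) (Fin n) ℍ[ℝ])
    (hA : A * Ainv = 1 ∧ Ainv * A = 1)
    (Vm : Matrix (Fin n) (Fin m) ℍ[ℝ])
    (Hm : Matrix (Fin m) (Fin m) ℍ[ℝ])
    (hAV : A * Vm = Vm * Hm)
    (hind : ∀ α : Fin m → ℍ[ℝ], Vm *ᵥ α = 0 → α = 0) :
    ∃ Hinv : Matrix (Fin m) (Fin m) ℍ[ℝ],
      Hm * Hinv = 1 ∧ Hinv * Hm = 1 ∧
      ∀ (x₀ : Fin n → ℍ[ℝ]) (β : ℝ), 0 < β →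
        A *ᵥ (x₀ + Vm *ᵥ (Hinv *ᵥ (fun i => if (i : ℕ) = 0 then ((β : ℝ) : ℍ[ℝ]) else 0))) =
          A *ᵥ x₀ + Vm *ᵥ (fun i => if (i : ℕ) = 0 then ((β : ℝ) : ℍ[ℝ]) else 0) := by
  have hAunit : IsUnit A := ⟨⟨A, Ainv, hA.1, hA.2⟩, rfl⟩
  have hHunit : IsUnit Hm := isUnit_of_mulVec_injective <|
    mulVec_injective_of_mul_eq_mul hAV (mulVec_injective_of_isUnit hAunit)
      (mulVec_injective_of_forall_mulVec_eq_zero hind)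
  refine ⟨↑hHunit.unit⁻¹, hHunit.mul_val_inv, hHunit.val_inv_mul, fun x₀ β _ => ?_⟩
  rw [mulVec_add, mulVec_mulVec, hAV, ← mulVec_mulVec, mulVec_mulVec _ Hm, hHunit.mul_val_inv,
    one_mulVec]
end
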